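/- Let F, h be as above with F' > 0, h' > 0, and let ω, ε ∈ ℝ, 𝓔 > 0, c > 0 (unit cost), S > 0 (revenue share). Define marginal cost λ = c/(F'(h(v))·exp(ω)·𝓔), output elasticity e = F'(h(v))·(1/F(h(v)))·v·h'(v), markup μ = e/S, price P = μ·λ, and revenue R = P·F(h(v))·exp(ω)·exp(ε). Then R = c · v·h'(v) · S⁻¹ · 𝓔⁻¹ · exp(ε). In particular, R does not depend on ω or on the outer function F. -/

import Mathlib

theorem markup_mul_marginalCost_mul_output {F F' A 𝓔 S c x : ℝ}
    (hF : F ≠ 0) (hF' : F' ≠ 0) (hA : A ≠ 0) :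
    F' * (1 / F) * x / S * (c / (F' * A * 𝓔)) * F * A = c * x * S⁻¹ * 𝓔⁻¹ := by
  field_simp

theorem stmt_5_general (F h : ℝ → ℝ) (v ω ε 𝓔 c S : ℝ)
    (hFpos : 0 < F (h v)) (hF' : 0 < deriv F (h v))
    (lam e μ P R : ℝ)
    (hlam : lam = c / (deriv F (h v) * Real.exp ω * 𝓔))
    (he : e = deriv F (h v) * (1 / F (h v)) * (v * deriv h v))
    (hμ : μ = e / S)
    (hP : P = μ * lam)
    (hR : R = P * F (h v) * Real.exp ω * Real.exp ε) :
    R = c * (v * deriv h v) * S⁻¹ * 𝓔⁻¹ * Real.exp ε := by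
  subst hR hP hμ he hlam
  rw [markup_mul_marginalCost_mul_output hFpos.ne' hF'.ne' (Real.exp_pos ω).ne']

/-- Eq. (10) of Theorem 1: substituting price = markup × marginal cost into the
revenue equation, both `exp ω` and the outer function `F` cancel:
`R = c · v·h'(v) · S⁻¹ · 𝓔⁻¹ · exp ε`. -/
theorem stmt_5 (F h : ℝ → ℝ) (v ω ε 𝓔 c S : ℝ)
    (hv : 0 < v) (h𝓔 : 0 < 𝓔) (hc : 0 < c) (hS : 0 < S)
    (hFpos : 0 < F (h v)) (hF' : 0 < deriv F (h v)) (hh' : 0 < deriv h v)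
    (lam e μ P R : ℝ)
    (hlam : lam = c / (deriv F (h v) * Real.exp ω * 𝓔))
    (he : e = deriv F (h v) * (1 / F (h v)) * (v * deriv h v))
    (hμ : μ = e / S)
    (hP : P = μ * lam)
    (hR : R = P * F (h v) * Real.exp ω * Real.exp ε) :
    R = c * (v * deriv h v) * S⁻¹ * 𝓔⁻¹ * Real.exp ε :=
  stmt_5_general F h v ω ε 𝓔 c S hFpos hF' lam e μ P R hlam he hμ hP hR
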